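/- arXiv:2411.12399 — 3 statements merged into one kernel-verified Lean document; each statement's English description precedes it below -/
import Mathlib

section
/- Let 1 ≤ p < 2 and K_p = 4/((2-p)e). Then for every t ∈ [0,1], K_p² t^p ≥ t² (log(t²))². -/
open scoped BigOperators ComplexOrder
open Matrix

noncomputable section

abbrev QM (n : ℕ) := Matrix (Fin n → Fin 2) (Fin n → Fin 2) ℂ

namespace QM

variable {n : ℕ}

/-- Normalized trace on `M_{2^n}`. -/
def qtr (T : QM n) : ℂ := Matrix.trace T / 2 ^ n

/-- Singular values of `T` (eigenvalues of `|T| = (TᴴT)^{1/2}`). -/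
def sv (T : QM n) (i : Fin n → Fin 2) : ℝ :=
  Real.sqrt ((Matrix.posSemidef_conjTranspose_mul_self T).1.eigenvalues i)

/-- Normalized Schatten `p`-norm: `(tr |T|^p)^{1/p}` with normalized trace. -/
def snorm (p : ℝ) (T : QM n) : ℝ :=
  ((∑ i, sv T i ^ p) / 2 ^ n) ^ (1 / p)

/-- Squared normalized `L₂`-norm: `tr(TᴴT)`. -/
def l2sq (T : QM n) : ℝ := (Matrix.trace (Tᴴ * T)).re / 2 ^ n

/-- Variance `‖T - tr(T)1‖₂²`. -/
def qvar (T : QM n) : ℝ := l2sq (T - qtr T • 1)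

/-- Operator norm. -/
def opnorm (T : QM n) : ℝ := ‖Matrix.toEuclideanCLM (𝕜 := ℂ) T‖

/-- The Pauli matrices. -/
def pauli : Fin 4 → Matrix (Fin 2) (Fin 2) ℂ
  | 0 => 1
  | 1 => !![1, 0; 0, -1]
  | 2 => !![0, 1; 1, 0]
  | 3 => !![0, Complex.I; -Complex.I, 0]

/-- The Pauli tensor basis `σ_s` for `s ∈ {0,1,2,3}^n`. -/
def sigma (s : Fin n → Fin 4) : QM n :=
  Matrix.of fun x y => ∏ j, pauli (s j) (x j) (y j)

/-- Fourier coefficient `T̂(s) = tr(σ_s* T)`. -/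
def fc (T : QM n) (s : Fin n → Fin 4) : ℂ := qtr ((sigma s)ᴴ * T)

/-- Support of a multi-index. -/
def supp (s : Fin n → Fin 4) : Finset (Fin n) := Finset.univ.filter fun j => s j ≠ 0

/-- The `k`-th partial derivative, via the Fourier expansion. -/
def djF (k : Fin n) (T : QM n) : QM n :=
  ∑ s ∈ Finset.univ.filter (fun s : Fin n → Fin 4 => s k ≠ 0), fc T s • sigma s

/-- Conditional expectation onto the subalgebra `M_J`. -/
def condExp (J : Finset (Fin n)) (T : QM n) : QM n :=
  ∑ s ∈ Finset.univ.filter (fun s : Fin n → Fin 4 => supp s ⊆ J), fc T s • sigma s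

/-- The restriction operator `R_j^J(T) = 𝓔_{M_{J^c ∪ {j}}}(d_j(T))`. -/
def RR (J : Finset (Fin n)) (j : Fin n) (T : QM n) : QM n :=
  condExp (Jᶜ ∪ {j}) (djF j T)

/-- The operator `δ^𝓛`. -/
def deltaL (δ : ℝ) (T : QM n) : QM n :=
  ∑ s : Fin n → Fin 4, (((δ : ℂ) ^ (supp s).card) * fc T s) • sigma s

/-- The quantum Ornstein–Uhlenbeck semigroup `e^{-t𝓛}`. -/
def heat (t : ℝ) (T : QM n) : QM n :=
  ∑ s : Fin n → Fin 4, ((Real.exp (-t * (supp s).card) : ℂ) * fc T s) • sigma s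

/-- `H_d(T) = (1-1/(2d))^𝓛(T) - (1-1/d)^𝓛(T)`. -/
def Hd (d : ℕ) (T : QM n) : QM n :=
  deltaL (1 - 1 / (2 * (d : ℝ))) T - deltaL (1 - 1 / (d : ℝ)) T

/-- Probability of a subset `J` when each coordinate is included with probability `δ`. -/
def mu (δ : ℝ) (J : Finset (Fin n)) : ℝ := δ ^ J.card * (1 - δ) ^ (n - J.card)

/-- Total `L₂`-influence via Fourier coefficients. -/
def InfF (T : QM n) : ℝ := ∑ s : Fin n → Fin 4, ((supp s).card : ℝ) * ‖fc T s‖ ^ 2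

/-- Spectral weight `W_{≈d}(T)`. -/
def Wapprox (T : QM n) (d : ℕ) : ℝ :=
  ∑ s ∈ Finset.univ.filter
      (fun s : Fin n → Fin 4 => d ≤ (supp s).card ∧ (supp s).card < 2 * d),
    ‖fc T s‖ ^ 2

/-- Conditional expectation onto the algebra with identity in slot `j`
(`id ⊗ ⋯ ⊗ tr(·)1₂ ⊗ ⋯ ⊗ id`). -/
def slotExp (j : Fin n) (T : QM n) : QM n :=
  Matrix.of fun x y =>
    if x j = y j then (∑ b : Fin 2, T (Function.update x j b) (Function.update y j b)) / 2
    else 0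

/-- The `j`-th partial derivative `d_j = id - (id ⊗ ⋯ ⊗ tr(·)1₂ ⊗ ⋯ ⊗ id)`. -/
def dj (j : Fin n) (T : QM n) : QM n := T - slotExp j T

end QM

private lemma log_le_div_e {y : ℝ} (hy : 0 < y) : Real.log y ≤ y / Real.exp 1 := by
  have h := Real.log_le_sub_one_of_pos (div_pos hy (Real.exp_pos 1))
  rw [Real.log_div (ne_of_gt hy) (Real.exp_ne_zero 1), Real.log_exp] at h
  linarith

private lemma mul_neg_log_le {u : ℝ} (hu : 0 < u) : u * (-Real.log u) ≤ 1 / Real.exp 1 := by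
  have h := log_le_div_e (y := 1 / u) (by positivity)
  rw [Real.log_div one_ne_zero hu.ne', Real.log_one] at h
  have h2 : u * (0 - Real.log u) ≤ u * ((1 / u) / Real.exp 1) :=
    mul_le_mul_of_nonneg_left h hu.le
  have h3 : u * ((1 / u) / Real.exp 1) = 1 / Real.exp 1 := by
    field_simp
  linarith [h2, h3.le, h3.ge]

/-- The scalar inequality underlying the modified log-Sobolev inequality: for `1 ≤ p < 2`
and `K_p = 4/((2-p)e)`, one has `K_p² t^p ≥ t² log²(t²)` for all `t ∈ [0,1]`. -/
theorem scalar_mlsi (p : ℝ) (hp1 : 1 ≤ p) (hp2 : p < 2) (t : ℝ) (ht0 : 0 ≤ t) (ht1 : t ≤ 1) :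
    t ^ 2 * Real.log (t ^ 2) ^ 2 ≤ (4 / ((2 - p) * Real.exp 1)) ^ 2 * t ^ p := by
  rcases eq_or_lt_of_le ht0 with h0 | h0
  · rw [← h0]
    rw [Real.zero_rpow (by linarith : p ≠ 0)]
    norm_num
  · set a : ℝ := (2 - p) / 2 with ha_def
    have ha : 0 < a := by simp only [ha_def]; linarith
    have hE : (0:ℝ) < Real.exp 1 := Real.exp_pos 1
    have hu : (0:ℝ) < t ^ a := Real.rpow_pos_of_pos h0 a
    have hk := mul_neg_log_le hu
    rw [Real.log_rpow h0] at hk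
    have hL : 0 ≤ -Real.log t := by
      have := Real.log_nonpos ht0 ht1; linarith
    have key2 : t ^ a * (-Real.log t) ≤ 1 / (a * Real.exp 1) := by
      rw [le_div_iff₀ (by positivity)]
      have : t ^ a * -(a * Real.log t) = a * (t ^ a * (-Real.log t)) := by ring
      rw [this] at hk
      calc t ^ a * -Real.log t * (a * Real.exp 1)
          = (a * (t ^ a * (-Real.log t))) * Real.exp 1 := by ring
        _ ≤ (1 / Real.exp 1) * Real.exp 1 := by
            apply mul_le_mul_of_nonneg_right hk hE.le
        _ = 1 := by field_simp
    have ht2 : (t : ℝ) ^ (2:ℕ) = t ^ p * (t ^ a * t ^ a) := by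
      rw [← Real.rpow_add h0, ← Real.rpow_add h0, ← Real.rpow_natCast t 2]
      norm_num [ha_def]
    have hsq : (t ^ a * (-Real.log t)) ^ 2 ≤ (1 / (a * Real.exp 1)) ^ 2 :=
      pow_le_pow_left₀ (by positivity) key2 2
    have hK : 4 / ((2 - p) * Real.exp 1) = 2 / (a * Real.exp 1) := by
      rw [ha_def]
      field_simp
      ring
    have htp : (0:ℝ) < t ^ p := Real.rpow_pos_of_pos h0 p
    rw [hK]
    calc t ^ 2 * Real.log (t ^ 2) ^ 2
        = t ^ p * (4 * (t ^ a * (-Real.log t)) ^ 2) := by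
          rw [Real.log_pow, ht2]; push_cast; ring
      _ ≤ t ^ p * (4 * (1 / (a * Real.exp 1)) ^ 2) := by
          apply mul_le_mul_of_nonneg_left _ htp.le
          have := hsq; nlinarith
      _ = (2 / (a * Real.exp 1)) ^ 2 * t ^ p := by ring
end
end

section
/- Let T be a self-adjoint contraction in M_{2^n} with |T| ≤ 1 and 1 ≤ p < 2. Then tr[-|T|² log(|T|²)] ≤ K_p ‖T‖₂ ‖T‖_p^{p/2}, where K_p = 4/((2-p)e). -/
open scoped BigOperators ComplexOrder
open Matrix

noncomputable section

/-! Cauchy–Schwarz splits `∑ -sᵢ² log sᵢ² = ∑ sᵢ · (-sᵢ log sᵢ²)` into `‖T‖₂` times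
`(∑ sᵢ² log² sᵢ²)^{1/2}`, and the scalar bound `t² log² t² ≤ K_p² t^p` on `[0, 1]` turns the
second factor into `K_p (∑ sᵢ^p)^{1/2}`.  The scalar bound is `-u log u ≤ 1/e` for
`u = t^{(2-p)/2}`. -/

open Real Finset

namespace Real

lemma log_le_div_exp_one {y : ℝ} (hy : 0 < y) : log y ≤ y / exp 1 := by
  have h := log_le_sub_one_of_pos (show 0 < y / exp 1 by positivity)
  rw [log_div hy.ne' (exp_pos 1).ne', log_exp] at h
  linarith

lemma rpow_mul_neg_log_le {a t : ℝ} (ha : 0 < a) (ht : 0 < t) :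
    t ^ a * -log t ≤ 1 / (a * exp 1) := by
  have hlog : -a * log t ≤ t ^ (-a) / exp 1 := by
    simpa [log_rpow ht] using log_le_div_exp_one (rpow_pos_of_pos ht (-a))
  have hinv : t ^ a * t ^ (-a) = 1 := by rw [← rpow_add ht]; simp
  rw [le_div_iff₀ (by positivity)]
  calc t ^ a * -log t * (a * exp 1) = t ^ a * (-a * log t) * exp 1 := by ring
    _ ≤ t ^ a * (t ^ (-a) / exp 1) * exp 1 := by gcongr
    _ = 1 := by field_simp; exact hinv

lemma sq_mul_log_sq_le {p t : ℝ} (hp : 0 < p) (hp2 : p < 2) (ht0 : 0 ≤ t) (ht1 : t ≤ 1) :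
    (t * log (t ^ 2)) ^ 2 ≤ (4 / ((2 - p) * exp 1)) ^ 2 * t ^ p := by
  rcases ht0.eq_or_lt with rfl | ht
  · simp [zero_rpow hp.ne']
  set a := (2 - p) / 2
  have ha : 0 < a := by simp only [a]; linarith
  have hbound := rpow_mul_neg_log_le ha ht
  have hnonneg : 0 ≤ t ^ a * -log t :=
    mul_nonneg (rpow_nonneg ht0 a) (neg_nonneg.mpr (log_nonpos ht0 ht1))
  have hsplit : (t ^ a) ^ 2 * t ^ p = t ^ 2 := by
    rw [sq, ← rpow_add ht, ← rpow_add ht, ← rpow_two]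
    congr 1
    ring
  calc (t * log (t ^ 2)) ^ 2 = 4 * (t ^ a * -log t) ^ 2 * t ^ p := by
        rw [log_pow]; push_cast; linear_combination (-4 * log t ^ 2) * hsplit
    _ ≤ 4 * (1 / (a * exp 1)) ^ 2 * t ^ p := by gcongr
    _ = (4 / ((2 - p) * exp 1)) ^ 2 * t ^ p := by
        simp only [a]; field_simp; ring

lemma sum_neg_sq_mul_log_sq_le {ι : Type*} (s : Finset ι) {x : ι → ℝ} {p : ℝ} (hp : 0 < p)
    (hp2 : p < 2) (hx0 : ∀ i ∈ s, 0 ≤ x i) (hx1 : ∀ i ∈ s, x i ≤ 1) :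
    ∑ i ∈ s, -(x i ^ 2 * log (x i ^ 2)) ≤
      4 / ((2 - p) * exp 1) * √(∑ i ∈ s, x i ^ 2) * √(∑ i ∈ s, x i ^ p) := by
  set K := 4 / ((2 - p) * exp 1)
  have hK : 0 ≤ K := div_nonneg (by norm_num) (mul_nonneg (by linarith) (exp_pos 1).le)
  calc ∑ i ∈ s, -(x i ^ 2 * log (x i ^ 2))
      = ∑ i ∈ s, x i * -(x i * log (x i ^ 2)) := by congr! 1; ring
    _ ≤ √(∑ i ∈ s, x i ^ 2) * √(∑ i ∈ s, (-(x i * log (x i ^ 2))) ^ 2) :=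
        sum_mul_le_sqrt_mul_sqrt s _ _
    _ ≤ √(∑ i ∈ s, x i ^ 2) * √(K ^ 2 * ∑ i ∈ s, x i ^ p) := by
        rw [mul_sum]
        gcongr with i hi
        rw [neg_sq]
        exact sq_mul_log_sq_le hp hp2 (hx0 i hi) (hx1 i hi)
    _ = K * √(∑ i ∈ s, x i ^ 2) * √(∑ i ∈ s, x i ^ p) := by
        rw [sqrt_mul (sq_nonneg K), sqrt_sq hK]; ring

end Real

namespace QM

variable {n : ℕ}

lemma sv_nonneg (T : QM n) (i : Fin n → Fin 2) : 0 ≤ sv T i := Real.sqrt_nonneg _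

lemma snorm_rpow_half {p : ℝ} (hp : p ≠ 0) (T : QM n) :
    snorm p T ^ (p / 2) = √((∑ i, sv T i ^ p) / 2 ^ n) := by
  have hsum : 0 ≤ (∑ i, sv T i ^ p) / 2 ^ n :=
    div_nonneg (sum_nonneg fun i _ => rpow_nonneg (sv_nonneg T i) p) (by positivity)
  rw [snorm, sqrt_eq_rpow, ← rpow_mul hsum]
  field_simp

lemma snorm_two (T : QM n) : snorm 2 T = √((∑ i, sv T i ^ 2) / 2 ^ n) := by
  simpa using snorm_rpow_half two_ne_zero T

end QM

theorem entropy_bound_general {n : ℕ} (p : ℝ) (hp1 : 1 ≤ p) (hp2 : p < 2) (T : QM n)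
    (hcontr : ∀ i, QM.sv T i ≤ 1) :
    (∑ i, -(QM.sv T i ^ 2 * Real.log (QM.sv T i ^ 2))) / 2 ^ n ≤
      (4 / ((2 - p) * Real.exp 1)) * QM.snorm 2 T * QM.snorm p T ^ (p / 2) := by
  have hp : 0 < p := by linarith
  have hN : (0 : ℝ) < 2 ^ n := by positivity
  rw [QM.snorm_two, QM.snorm_rpow_half hp.ne', sqrt_div' _ hN.le, sqrt_div' _ hN.le]
  calc (∑ i, -(QM.sv T i ^ 2 * log (QM.sv T i ^ 2))) / 2 ^ n
      ≤ 4 / ((2 - p) * exp 1) * √(∑ i, QM.sv T i ^ 2) * √(∑ i, QM.sv T i ^ p) / 2 ^ n := by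
        gcongr
        exact sum_neg_sq_mul_log_sq_le univ hp hp2 (fun i _ => QM.sv_nonneg T i)
          fun i _ => hcontr i
    _ = _ := by field_simp; rw [sq_sqrt hN.le]

/-- For a self-adjoint `T ∈ M_{2^n}` with `|T| ≤ 1` and `1 ≤ p < 2`,
`tr[-|T|² log(|T|²)] ≤ K_p ‖T‖₂ ‖T‖_p^{p/2}` where `K_p = 4/((2-p)e)`.
The left side is expressed spectrally via the singular values of `T`. -/
theorem entropy_bound {n : ℕ} (p : ℝ) (hp1 : 1 ≤ p) (hp2 : p < 2) (T : QM n)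
    (hsa : Tᴴ = T) (hcontr : ∀ i, QM.sv T i ≤ 1) :
    (∑ i, -(QM.sv T i ^ 2 * Real.log (QM.sv T i ^ 2))) / 2 ^ n ≤
      (4 / ((2 - p) * Real.exp 1)) * QM.snorm 2 T * QM.snorm p T ^ (p / 2) :=
  entropy_bound_general p hp1 hp2 T hcontr
end
end

section
/- Let T ∈ M_{2^n} with ‖T‖_∞ ≤ 1, let J ⊆ [n], and let Inf(T) = Σ_{k=1}^n ‖d_k(T)‖₂² denote the total L₂-influence. Then Σ_{j ∈ J} Inf(R_j^J(T)) ≤ var(T) + Inf(T). -/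
open scoped BigOperators ComplexOrder
open Matrix

noncomputable section

/-!
In the Pauli basis, `d_k` keeps the Fourier modes `s` with `s k ≠ 0` and `𝓔_{M_A}` those
with `supp s ⊆ A`, so that `Inf(S) = Σ_s |supp s| |Ŝ(s)|²` and `R_j^J(T)` carries exactly the
modes of `T` with `j ∈ supp s ⊆ Jᶜ ∪ {j}`. Such an `s` determines `j` as the only point of
`supp s ∩ J`, so the modes of the `R_j^J(T)`, `j ∈ J`, are disjoint and
`Σ_{j ∈ J} Inf(R_j^J(T)) ≤ Inf(T) ≤ var(T) + Inf(T)`.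
-/

namespace QM

variable {n : ℕ}

lemma sum_pauli_star_mul_pauli (a b : Fin 4) :
    ∑ p : Fin 2 × Fin 2, star (pauli a p.1 p.2) * pauli b p.1 p.2 = if a = b then 2 else 0 := by
  fin_cases a <;> fin_cases b <;>
    simp [pauli, Fintype.sum_prod_type, Fin.sum_univ_two, Complex.ext_iff] <;> norm_num

lemma trace_conjTranspose_sigma_mul_sigma (s t : Fin n → Fin 4) :
    trace ((sigma s)ᴴ * sigma t) = if s = t then (2 : ℂ) ^ n else 0 := by
  have h_factor : trace ((sigma s)ᴴ * sigma t)
      = ∏ j, ∑ p : Fin 2 × Fin 2, star (pauli (s j) p.1 p.2) * pauli (t j) p.1 p.2 := by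
    rw [Finset.prod_univ_sum, trace]
    simp only [diag, mul_apply, conjTranspose_apply, sigma, of_apply, star_prod,
      ← Finset.prod_mul_distrib]
    rw [Finset.sum_comm, ← Fintype.sum_prod_type']
    exact Fintype.sum_equiv
      (Equiv.arrowProdEquivProdArrow (Fin n) (fun _ => Fin 2) (fun _ => Fin 2)).symm _ _
      fun _ => rfl
  rw [h_factor]
  simp only [sum_pauli_star_mul_pauli]
  by_cases hst : s = t
  · simp [hst]
  · obtain ⟨j, hj⟩ := Function.ne_iff.mp hst
    rw [if_neg hst]
    exact Finset.prod_eq_zero (Finset.mem_univ j) (if_neg hj)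

lemma fc_sum_smul_sigma (c : (Fin n → Fin 4) → ℂ) (s : Fin n → Fin 4) :
    fc (∑ t, c t • sigma t) s = c s := by
  simp only [fc, qtr, Finset.mul_sum, trace_sum, Matrix.mul_smul, trace_smul,
    trace_conjTranspose_sigma_mul_sigma, smul_eq_mul, mul_ite, mul_zero, Finset.sum_ite_eq,
    Finset.mem_univ, if_true]
  field_simp

lemma l2sq_sum_smul_sigma (c : (Fin n → Fin 4) → ℂ) :
    l2sq (∑ s, c s • sigma s) = ∑ s, ‖c s‖ ^ 2 := by
  have h_trace : trace ((∑ s, c s • sigma s)ᴴ * ∑ t, c t • sigma t)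
      = ((∑ s, ‖c s‖ ^ 2 : ℝ) : ℂ) * 2 ^ n := by
    simp only [conjTranspose_sum, conjTranspose_smul, Finset.sum_mul, Finset.mul_sum,
      Matrix.smul_mul, Matrix.mul_smul, trace_sum, trace_smul, trace_conjTranspose_sigma_mul_sigma,
      smul_eq_mul, mul_ite, mul_zero, Finset.sum_ite_eq', Finset.mem_univ, if_true]
    rw [Complex.ofReal_sum, Finset.sum_mul]
    refine Finset.sum_congr rfl fun s _ => ?_
    rw [Complex.star_def, ← mul_assoc, Complex.mul_conj']
    norm_cast
  rw [l2sq, h_trace]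
  norm_cast
  field_simp

lemma l2sq_nonneg (S : QM n) : 0 ≤ l2sq S := by
  refine div_nonneg ?_ (by positivity)
  simp only [trace, diag, mul_apply, conjTranspose_apply, Complex.re_sum]
  refine Finset.sum_nonneg fun x _ => Finset.sum_nonneg fun y _ => ?_
  rw [Complex.star_def, ← Complex.normSq_eq_conj_mul_self, Complex.ofReal_re]
  exact Complex.normSq_nonneg _

lemma sum_filter_fc_smul_sigma (p : (Fin n → Fin 4) → Prop) [DecidablePred p] (S : QM n) :
    ∑ s ∈ Finset.univ.filter p, fc S s • sigma s
      = ∑ s, (if p s then fc S s else 0) • sigma s := by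
  simp only [Finset.sum_filter, ite_smul, zero_smul]

lemma fc_djF (k : Fin n) (S : QM n) (s : Fin n → Fin 4) :
    fc (djF k S) s = if s k ≠ 0 then fc S s else 0 := by
  rw [djF, sum_filter_fc_smul_sigma, fc_sum_smul_sigma]

lemma fc_condExp (A : Finset (Fin n)) (S : QM n) (s : Fin n → Fin 4) :
    fc (condExp A S) s = if supp s ⊆ A then fc S s else 0 := by
  rw [condExp, sum_filter_fc_smul_sigma, fc_sum_smul_sigma]

lemma fc_RR (J : Finset (Fin n)) (j : Fin n) (T : QM n) (s : Fin n → Fin 4) :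
    fc (RR J j T) s = if supp s ⊆ Jᶜ ∪ {j} ∧ s j ≠ 0 then fc T s else 0 := by
  rw [RR, fc_condExp, fc_djF, ite_and]

lemma l2sq_djF (k : Fin n) (S : QM n) :
    l2sq (djF k S) = ∑ s, if s k ≠ 0 then ‖fc S s‖ ^ 2 else 0 := by
  rw [djF, sum_filter_fc_smul_sigma, l2sq_sum_smul_sigma]
  simp only [apply_ite (‖·‖ ^ 2), norm_zero, ne_eq, OfNat.ofNat_ne_zero, not_false_eq_true,
    zero_pow]

lemma sum_l2sq_djF_eq_InfF (S : QM n) : ∑ k, l2sq (djF k S) = InfF S := by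
  simp only [l2sq_djF, InfF]
  rw [Finset.sum_comm]
  refine Finset.sum_congr rfl fun s _ => ?_
  rw [← Finset.sum_filter, Finset.sum_const, nsmul_eq_mul]
  rfl

lemma InfF_RR (J : Finset (Fin n)) (j : Fin n) (T : QM n) :
    InfF (RR J j T)
      = ∑ s, if supp s ⊆ Jᶜ ∪ {j} ∧ s j ≠ 0 then ((supp s).card : ℝ) * ‖fc T s‖ ^ 2 else 0 := by
  refine Finset.sum_congr rfl fun s _ => ?_
  rw [fc_RR]
  split_ifs <;> simp

lemma card_filter_supp_subset_compl_union_le_one (J : Finset (Fin n)) (s : Fin n → Fin 4) :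
    (J.filter fun j => supp s ⊆ Jᶜ ∪ {j} ∧ s j ≠ 0).card ≤ 1 := by
  refine Finset.card_le_one.mpr fun a ha b hb => ?_
  simp only [Finset.mem_filter] at ha hb
  have ha_supp : a ∈ supp s := by simpa [supp] using ha.2.2
  rcases Finset.mem_union.mp (hb.2.1 ha_supp) with h | h
  · exact absurd ha.1 (Finset.mem_compl.mp h)
  · exact Finset.mem_singleton.mp h

lemma sum_InfF_RR_le_InfF (J : Finset (Fin n)) (T : QM n) :
    ∑ j ∈ J, InfF (RR J j T) ≤ InfF T := by
  simp only [InfF_RR]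
  rw [Finset.sum_comm]
  refine Finset.sum_le_sum fun s _ => ?_
  rw [← Finset.sum_filter, Finset.sum_const, nsmul_eq_mul]
  have h_card := card_filter_supp_subset_compl_union_le_one J s
  exact mul_le_of_le_one_left (by positivity) (by exact_mod_cast h_card)

end QM

theorem rr_inf_general {n : ℕ} (T : QM n) (J : Finset (Fin n)) :
    ∑ j ∈ J, (∑ k, QM.l2sq (QM.djF k (QM.RR J j T))) ≤
      QM.qvar T + ∑ k, QM.l2sq (QM.djF k T) := by
  simp only [QM.sum_l2sq_djF_eq_InfF]
  exact (QM.sum_InfF_RR_le_InfF J T).trans (le_add_of_nonneg_left (QM.l2sq_nonneg _))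

/-- For `T ∈ M_{2^n}` with `‖T‖_∞ ≤ 1` and `J ⊆ [n]`,
`Σ_{j ∈ J} Inf(R_j^J(T)) ≤ var(T) + Inf(T)` where `Inf(S) = Σ_k ‖d_k(S)‖₂²`. -/
theorem rr_inf {n : ℕ} (T : QM n) (hT : QM.opnorm T ≤ 1) (J : Finset (Fin n)) :
    ∑ j ∈ J, (∑ k, QM.l2sq (QM.djF k (QM.RR J j T))) ≤
      QM.qvar T + ∑ k, QM.l2sq (QM.djF k T) :=
  rr_inf_general T J
end
end
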